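/- arXiv:1709.04010 — 2 statements merged into one kernel-verified Lean document; each statement's English description precedes it below -/
import Mathlib

section
/- Let B_r(z₁,z₂) = (rz₁, rz₁) for 0 < r ≤ 1. The composition operator C_{B_r} is bounded on H²(𝔻²) for every r ∈ (0,1) but unbounded for r = 1. -/
/-!
Both parts rest on `poly a (w, w) = ∑ₘ dₘ wᵐ` with `dₘ = ∑_{j₁+j₂=m} a_j` (`diagCoeff`).
For `‖r‖ < 1`, put the coefficients `rᵐ dₘ` on the `z₁`-axis: Cauchy–Schwarz over the `m + 1`
indices with `j₁ + j₂ = m` gives `|dₘ|² ≤ (m + 1) ∑_{j₁+j₂=m} |a_j|²`, and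
`(m + 1) ‖r‖^{2m} ≤ (1 - ‖r‖²)⁻¹`.
For `r = 1`, restricting to `z₂ = 0` and using uniqueness of power series coefficients, every
representation of `poly a (z₁, z₁)` carries `dₘ` at `(m, 0)`. For `a` the indicator of
`{j₁ + j₂ = n}` this gives `∑ |b|² ≥ (n + 1)²` while `∑ |a|² = n + 1`.
-/

open Complex ComplexOrder

noncomputable section

/-- The open bidisk `𝔻² ⊆ ℂ²`. -/
def bidisk : Set (ℂ × ℂ) := {z | ‖z.1‖ < 1 ∧ ‖z.2‖ < 1}

/-- A positive kernel on the bidisk: self-adjoint on `𝔻²×𝔻²` and all finite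
Gram-type matrices built from points of `𝔻²` are positive semi-definite. -/
def IsPosKernelBidisk (K : ℂ × ℂ → ℂ × ℂ → ℂ) : Prop :=
  (∀ z ∈ bidisk, ∀ w ∈ bidisk, K z w = starRingEnd ℂ (K w z)) ∧
  ∀ (m : ℕ) (l : Fin m → ℂ × ℂ), (∀ i, l i ∈ bidisk) → ∀ c : Fin m → ℂ,
    0 ≤ ∑ i : Fin m, ∑ j : Fin m, c i * starRingEnd ℂ (c j) * K (l i) (l j)

/-- `a` is the coefficient (power series) representation of `f` on the bidisk;
`f ∈ H²(𝔻²)` with `‖f‖² = Σ |a|²` when moreover `Σ |a|² < ∞`. -/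
def IsHardyRep (f : ℂ × ℂ → ℂ) (a : ℕ × ℕ → ℂ) : Prop :=
  ∀ z ∈ bidisk, HasSum (fun k : ℕ × ℕ => a k * z.1 ^ k.1 * z.2 ^ k.2) (f z)

/-- The two-variable analytic polynomial with coefficients `a`. -/
def poly (a : ℕ × ℕ →₀ ℂ) (z : ℂ × ℂ) : ℂ :=
  a.sum fun k c => c * z.1 ^ k.1 * z.2 ^ k.2

open Finset Filter Topology FormalMultilinearSeries

theorem hasFPowerSeriesAt_ofScalars_of_eventually_hasSum {𝕜 : Type*} [NontriviallyNormedField 𝕜]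
    {c : ℕ → 𝕜} {f : 𝕜 → 𝕜} (h : ∀ᶠ w in 𝓝 0, HasSum (fun m => c m * w ^ m) (f w)) :
    HasFPowerSeriesAt f (ofScalars 𝕜 c) 0 := by
  obtain ⟨ε, hε, hball⟩ := Metric.eventually_nhds_iff.mp h
  obtain ⟨w, hw0, hwε⟩ := NormedField.exists_norm_lt 𝕜 hε
  have hw : HasSum (fun m => c m * w ^ m) (f w) := hball (by simpa using hwε)
  have hradius : (‖w‖₊ : ENNReal) ≤ (ofScalars 𝕜 c).radius := by
    refine (ofScalars 𝕜 c).le_radius_of_tendsto (l := 0) ?_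
    simpa [ofScalars_norm, norm_mul, norm_pow] using hw.summable.tendsto_atTop_zero.norm
  refine ⟨‖w‖₊, ⟨hradius, by simpa using hw0, fun {y} hy => ?_⟩⟩
  have hyw : ‖y‖ < ‖w‖ := by simpa using hy
  simpa [ofScalars_apply_eq, mul_comm] using hball (by simpa using hyw.trans hwε)

theorem eq_of_eventually_hasSum_mul_pow {𝕜 : Type*} [NontriviallyNormedField 𝕜]
    {c d : ℕ → 𝕜} {f : 𝕜 → 𝕜}
    (hc : ∀ᶠ w in 𝓝 0, HasSum (fun m => c m * w ^ m) (f w))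
    (hd : ∀ᶠ w in 𝓝 0, HasSum (fun m => d m * w ^ m) (f w)) : c = d :=
  ofScalars_series_injective 𝕜 𝕜 <|
    (hasFPowerSeriesAt_ofScalars_of_eventually_hasSum hc).eq_formalMultilinearSeries
      (hasFPowerSeriesAt_ofScalars_of_eventually_hasSum hd)

theorem norm_sum_sq_le_card_mul_sum_norm_sq {ι E : Type*} [SeminormedAddCommGroup E]
    (s : Finset ι) (x : ι → E) : ‖∑ i ∈ s, x i‖ ^ 2 ≤ #s * ∑ i ∈ s, ‖x i‖ ^ 2 :=
  (pow_le_pow_left₀ (norm_nonneg _) (norm_sum_le s x) 2).trans sq_sum_le_card_mul_sum_sq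

theorem succ_mul_pow_le_inv_one_sub {x : ℝ} (h0 : 0 ≤ x) (h1 : x < 1) (m : ℕ) :
    (m + 1) * x ^ m ≤ (1 - x)⁻¹ :=
  calc (m + 1) * x ^ m = ∑ _i ∈ range (m + 1), x ^ m := by simp
    _ ≤ ∑ i ∈ range (m + 1), x ^ i :=
        sum_le_sum fun i hi => pow_le_pow_of_le_one h0 h1.le (mem_range_succ_iff.mp hi)
    _ ≤ ∑' i, x ^ i := (summable_geometric_of_lt_one h0 h1).sum_le_tsum _ fun i _ => by positivity
    _ = (1 - x)⁻¹ := tsum_geometric_of_lt_one h0 h1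

section DiagonalCoefficients

def diagCoeff (a : ℕ × ℕ →₀ ℂ) (m : ℕ) : ℂ :=
  ∑ j ∈ a.support with j.1 + j.2 = m, a j

variable (a : ℕ × ℕ →₀ ℂ)

theorem diagCoeff_eq_sum_antidiagonal (m : ℕ) :
    diagCoeff a m = ∑ j ∈ antidiagonal m, a j := by
  refine sum_subset (fun j hj => mem_antidiagonal.mpr (mem_filter.mp hj).2) fun j hj hja => ?_
  simpa [mem_antidiagonal.mp hj] using hja

theorem diagCoeff_eq_zero_of_notMem {m : ℕ} (hm : m ∉ a.support.image fun j => j.1 + j.2) :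
    diagCoeff a m = 0 := by
  refine sum_eq_zero fun j hj => absurd ?_ hm
  obtain ⟨hja, rfl⟩ := mem_filter.mp hj
  exact mem_image_of_mem _ hja

theorem hasSum_diagCoeff_mul_pow (w : ℂ) :
    HasSum (fun m => diagCoeff a m * w ^ m) (poly a (w, w)) := by
  have hpoly : poly a (w, w) =
      ∑ m ∈ a.support.image (fun j => j.1 + j.2), diagCoeff a m * w ^ m :=
    calc poly a (w, w) = ∑ j ∈ a.support, a j * w ^ (j.1 + j.2) := by
          simp only [poly, Finsupp.sum, pow_add, mul_assoc]
      _ = _ := by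
          rw [← sum_fiberwise_of_maps_to (fun j hj => mem_image_of_mem (fun j => j.1 + j.2) hj)]
          refine sum_congr rfl fun m _ => ?_
          rw [diagCoeff, sum_mul]
          exact sum_congr rfl fun j hj => by rw [(mem_filter.mp hj).2]
  rw [hpoly]
  exact hasSum_sum_of_ne_finset_zero fun m hm => by
    rw [diagCoeff_eq_zero_of_notMem a hm, zero_mul]

theorem norm_diagCoeff_sq_le (m : ℕ) :
    ‖diagCoeff a m‖ ^ 2 ≤ (m + 1) * ∑ j ∈ a.support with j.1 + j.2 = m, ‖a j‖ ^ 2 := by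
  have hcard : #{j ∈ a.support | j.1 + j.2 = m} ≤ m + 1 := by
    simpa using card_le_card (s := {j ∈ a.support | j.1 + j.2 = m}) (t := antidiagonal m)
      fun j hj => mem_antidiagonal.mpr (mem_filter.mp hj).2
  refine (norm_sum_sq_le_card_mul_sum_norm_sq _ _).trans ?_
  gcongr
  exact_mod_cast hcard

theorem sum_norm_sq_pow_mul_diagCoeff_le {r : ℂ} (hr : ‖r‖ < 1) :
    ∑ m ∈ a.support.image (fun j => j.1 + j.2), ‖r ^ m * diagCoeff a m‖ ^ 2 ≤
      (1 - ‖r‖ ^ 2)⁻¹ * ∑ j ∈ a.support, ‖a j‖ ^ 2 := by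
  have hr2 : ‖r‖ ^ 2 < 1 := by nlinarith [norm_nonneg r]
  rw [← sum_fiberwise_of_maps_to (s := a.support)
    (fun j hj => mem_image_of_mem (fun j => j.1 + j.2) hj), mul_sum]
  refine sum_le_sum fun m _ => ?_
  calc ‖r ^ m * diagCoeff a m‖ ^ 2 = (‖r‖ ^ 2) ^ m * ‖diagCoeff a m‖ ^ 2 := by
        rw [norm_mul, norm_pow]; ring
    _ ≤ (‖r‖ ^ 2) ^ m * ((m + 1) * ∑ j ∈ a.support with j.1 + j.2 = m, ‖a j‖ ^ 2) := by
        gcongr; exact norm_diagCoeff_sq_le a m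
    _ ≤ _ := by
        rw [← mul_assoc, mul_comm ((‖r‖ ^ 2) ^ m)]
        gcongr
        exact succ_mul_pow_le_inv_one_sub (by positivity) hr2 m

theorem exists_diagCoeff_eq_and_sum_norm_sq_eq (n : ℕ) :
    ∃ a : ℕ × ℕ →₀ ℂ, diagCoeff a n = (n + 1 : ℕ) ∧ ∑ k ∈ a.support, ‖a k‖ ^ 2 = n + 1 := by
  set a : ℕ × ℕ →₀ ℂ := Finsupp.indicator (antidiagonal n) fun _ _ => 1
  have ha : ∀ j ∈ antidiagonal n, a j = 1 := fun j hj => Finsupp.indicator_of_mem hj _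
  refine ⟨a, ?_, ?_⟩
  · rw [diagCoeff_eq_sum_antidiagonal, sum_congr rfl ha]
    simp
  · rw [sum_subset (Finsupp.support_indicator_subset _ _) fun j _ hj => by
      rw [Finsupp.notMem_support_iff.mp hj, norm_zero, sq, zero_mul],
      sum_congr rfl fun j hj => by rw [ha j hj]]
    simp

end DiagonalCoefficients

def liftFst (c : ℕ → ℂ) (k : ℕ × ℕ) : ℂ :=
  if k.2 = 0 then c k.1 else 0

theorem hasSum_liftFst_iff {E : Type*} [AddCommMonoid E] [TopologicalSpace E]
    (F : ℕ × ℕ → ℂ → E) (hF : ∀ k, F k 0 = 0) (c : ℕ → ℂ) {s : E} :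
    HasSum (fun k => F k (liftFst c k)) s ↔ HasSum (fun m => F (m, 0) (c m)) s := by
  refine ((Prod.mk_left_injective 0).hasSum_iff fun k hk => ?_).symm
  have hk2 : k.2 ≠ 0 := fun h => hk ⟨k.1, by rw [← h]⟩
  rw [liftFst, if_neg hk2, hF]

theorem isHardyRep_liftFst {g : ℂ → ℂ} {c : ℕ → ℂ}
    (h : ∀ w : ℂ, ‖w‖ < 1 → HasSum (fun m => c m * w ^ m) (g w)) :
    IsHardyRep (fun z => g z.1) (liftFst c) := fun z hz =>
  (hasSum_liftFst_iff (fun k x => x * z.1 ^ k.1 * z.2 ^ k.2) (by simp) c).mpr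
    (by simpa using h z.1 hz.1)

theorem IsHardyRep.hasSum_fst {f : ℂ × ℂ → ℂ} {b : ℕ × ℕ → ℂ} (h : IsHardyRep f b) {w : ℂ}
    (hw : ‖w‖ < 1) : HasSum (fun m => b (m, 0) * w ^ m) (f (w, 0)) := by
  have hslice := ((Prod.mk_left_injective 0).hasSum_iff fun k hk => ?_).mpr
    (h (w, 0) (by simpa [bidisk] using hw))
  · simpa [Function.comp_def] using hslice
  have hk2 : k.2 ≠ 0 := fun h => hk ⟨k.1, by rw [← h]⟩
  simp [zero_pow hk2]

theorem exists_isHardyRep_poly_comp_diag {r : ℂ} (hr : ‖r‖ < 1) (a : ℕ × ℕ →₀ ℂ) :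
    ∃ b : ℕ × ℕ → ℂ, Summable (fun k => ‖b k‖ ^ 2) ∧
      IsHardyRep (fun z => poly a (r * z.1, r * z.1)) b ∧
      ∑' k, ‖b k‖ ^ 2 ≤ (1 - ‖r‖ ^ 2)⁻¹ * ∑ k ∈ a.support, ‖a k‖ ^ 2 := by
  set c : ℕ → ℂ := fun m => r ^ m * diagCoeff a m
  have hnorm : HasSum (fun k => ‖liftFst c k‖ ^ 2)
      (∑ m ∈ a.support.image (fun j => j.1 + j.2), ‖c m‖ ^ 2) := by
    refine (hasSum_liftFst_iff (fun _ x => ‖x‖ ^ 2) (by simp) c).mpr ?_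
    exact hasSum_sum_of_ne_finset_zero fun m hm => by simp [c, diagCoeff_eq_zero_of_notMem a hm]
  refine ⟨liftFst c, hnorm.summable,
    isHardyRep_liftFst (g := fun w => poly a (r * w, r * w)) fun w _ => ?_, ?_⟩
  · convert hasSum_diagCoeff_mul_pow a (r * w) using 2 with m
    ring
  · rw [hnorm.tsum_eq]
    exact sum_norm_sq_pow_mul_diagCoeff_le a hr

theorem diagCoeff_eq_of_isHardyRep {a : ℕ × ℕ →₀ ℂ} {b : ℕ × ℕ → ℂ}
    (h : IsHardyRep (fun z => poly a (z.1, z.1)) b) (m : ℕ) : b (m, 0) = diagCoeff a m := by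
  refine congrFun (eq_of_eventually_hasSum_mul_pow (c := fun m => b (m, 0))
    (f := fun w => poly a (w, w)) ?_ (Eventually.of_forall (hasSum_diagCoeff_mul_pow a))) m
  filter_upwards [Metric.ball_mem_nhds (0 : ℂ) one_pos] with w hw
  exact h.hasSum_fst (by simpa using hw)

theorem norm_diagCoeff_sq_le_tsum {a : ℕ × ℕ →₀ ℂ} {b : ℕ × ℕ → ℂ}
    (hb : Summable fun k => ‖b k‖ ^ 2) (h : IsHardyRep (fun z => poly a (z.1, z.1)) b)
    (m : ℕ) : ‖diagCoeff a m‖ ^ 2 ≤ ∑' k, ‖b k‖ ^ 2 := by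
  rw [← diagCoeff_eq_of_isHardyRep h m]
  exact hb.le_tsum (m, 0) fun k _ => by positivity

/-- For `B_r(z₁,z₂) = (rz₁, rz₁)`, the composition operator `C_{B_r}` (defined on the
analytic polynomials) is bounded on `H²(𝔻²)` for every `0 < r < 1`, but unbounded
for `r = 1`. -/
theorem composition_Br_bounded_iff :
    (∀ r : ℝ, 0 < r → r < 1 → ∃ C : ℝ, 0 < C ∧ ∀ a : ℕ × ℕ →₀ ℂ,
      ∃ b : ℕ × ℕ → ℂ, Summable (fun k => ‖b k‖ ^ 2) ∧
        IsHardyRep (fun z => poly a (r * z.1, r * z.1)) b ∧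
        ∑' k, ‖b k‖ ^ 2 ≤ C ^ 2 * ∑ k ∈ a.support, ‖a k‖ ^ 2) ∧
    ¬ (∃ C : ℝ, ∀ a : ℕ × ℕ →₀ ℂ,
      ∃ b : ℕ × ℕ → ℂ, Summable (fun k => ‖b k‖ ^ 2) ∧
        IsHardyRep (fun z => poly a (z.1, z.1)) b ∧
        ∑' k, ‖b k‖ ^ 2 ≤ C ^ 2 * ∑ k ∈ a.support, ‖a k‖ ^ 2) := by
  refine ⟨fun r hr0 hr1 => ?_, fun ⟨C, hC⟩ => ?_⟩
  · have hr : ‖(r : ℂ)‖ < 1 := by simpa [abs_of_pos hr0] using hr1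
    have hpos : 0 < (1 - ‖(r : ℂ)‖ ^ 2)⁻¹ := inv_pos.mpr (by nlinarith [norm_nonneg (r : ℂ)])
    refine ⟨√(1 - ‖(r : ℂ)‖ ^ 2)⁻¹, Real.sqrt_pos.mpr hpos, fun a => ?_⟩
    rw [Real.sq_sqrt hpos.le]
    exact exists_isHardyRep_poly_comp_diag hr a
  · set n := ⌈C ^ 2⌉₊
    obtain ⟨a, hdiag, hnorm⟩ := exists_diagCoeff_eq_and_sum_norm_sq_eq n
    obtain ⟨b, hb, hrep, hbound⟩ := hC a
    have hlower : ((n : ℝ) + 1) ^ 2 ≤ C ^ 2 * (n + 1) :=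
      calc ((n : ℝ) + 1) ^ 2 = ‖diagCoeff a n‖ ^ 2 := by
            rw [hdiag, Complex.norm_natCast]; push_cast; rfl
        _ ≤ ∑' k, ‖b k‖ ^ 2 := norm_diagCoeff_sq_le_tsum hb hrep n
        _ ≤ C ^ 2 * (n + 1) := hnorm ▸ hbound
    nlinarith [Nat.le_ceil (C ^ 2), (n.cast_nonneg : (0 : ℝ) ≤ n)]
end
end

section
/- Let a(z) = (z₁−z₂)/2 on the bidisk. A function f ∈ H²(𝔻²) belongs to M(ā) = T_{ā}H²(𝔻²) if and only if there exist f₁, f₂ ∈ H²(𝔻) and f₃ ∈ H²(𝔻²) such that f(z) = f₁(z₁) + f₂(z₂) + (z₁−z₂)f₃(z). -/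
open MeasureTheory Complex Filter

noncomputable section

abbrev 𝕋 := AddCircle (1:ℝ)
abbrev T2 := 𝕋 × 𝕋
abbrev L2 := Lp ℂ 2 (volume : Measure T2)

/-- the character z₁^m z₂^n on the torus -/
def char (m n : ℤ) : C(T2, ℂ) :=
  ⟨fun p => fourier m p.1 * fourier n p.2, by fun_prop⟩

def charLp (m n : ℤ) : L2 := ContinuousMap.toLp 2 volume ℂ (char m n)

/-- Hardy space of the bidisk: closure of analytic polynomials in L²(𝕋²). -/
def H2 : Submodule ℂ L2 :=
  (Submodule.span ℂ {f | ∃ m n : ℕ, f = charLp m n}).topologicalClosure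

instance : CompleteSpace H2 := by
  have : IsClosed (H2 : Set L2) := Submodule.isClosed_topologicalClosure _
  exact this.completeSpace_coe

def P : L2 →L[ℂ] H2 := H2.orthogonalProjectionOnto

/-- Toeplitz operator with (essentially bounded) symbol φ. -/
def Toep (φ : T2 → ℂ) (hφ : MemLp φ ⊤ volume) (h : L2) : L2 :=
  (P (MemLp.toLp (φ • (h : T2 → ℂ)) ((Lp.memLp h).smul hφ)) : L2)

/-- Hankel operator with symbol φ. -/
def Hank (φ : T2 → ℂ) (hφ : MemLp φ ⊤ volume) (h : L2) : L2 :=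
  MemLp.toLp (φ • (h : T2 → ℂ)) ((Lp.memLp h).smul hφ)
    - Toep φ hφ h

lemma MeasureTheory.MemLp.conj' {f : T2 → ℂ} (hf : MemLp f ⊤ volume) :
    MemLp (fun p => starRingEnd ℂ (f p)) ⊤ volume := by
  constructor
  · exact RCLike.continuous_conj.comp_aestronglyMeasurable hf.1
  · have : eLpNorm (fun p => starRingEnd ℂ (f p)) ⊤ volume = eLpNorm f ⊤ volume := by
      apply eLpNorm_congr_norm_ae; filter_upwards with x; simp
    rw [this]; exact hf.2

/-- Fourier coefficients of an element of `L²(𝕋²)`. -/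
def fourierCoeff2 (f : L2) (m n : ℤ) : ℂ :=
  ∫ p : T2, starRingEnd ℂ (char m n p) * f p ∂volume

lemma symb_mem (c : ℤ × ℤ →₀ ℂ) :
    MemLp (fun p : T2 => c.sum fun k v => v * char k.1 k.2 p) ⊤ volume := by
  apply memLp_top_of_bound (Continuous.aestronglyMeasurable (by
    simp only [Finsupp.sum]
    exact continuous_finset_sum _ fun k _ =>
      continuous_const.mul (map_continuous (char k.1 k.2)))) (c.sum fun _ v => ‖v‖)
  filter_upwards with p
  refine (norm_sum_le _ _).trans ?_
  refine Finset.sum_le_sum fun k _ => ?_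
  have h1 : ‖char k.1 k.2 p‖ = 1 := by simp [char, fourier, Circle.norm_coe]
  simp [h1]

lemma a19_mem : MemLp (fun p : T2 => (char 1 0 p - char 0 1 p) / 2) ⊤ volume := by
  apply memLp_top_of_bound (Continuous.aestronglyMeasurable
    (((map_continuous (char 1 0)).sub (map_continuous (char 0 1))).div_const 2)) 1
  filter_upwards with p
  have h1 : ‖char 1 0 p‖ = 1 := by simp [char, fourier, Circle.norm_coe]
  have h2 : ‖char 0 1 p‖ = 1 := by simp [char, fourier, Circle.norm_coe]
  calc ‖(char 1 0 p - char 0 1 p) / 2‖ = ‖char 1 0 p - char 0 1 p‖ / 2 := by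
        rw [norm_div]; norm_num
    _ ≤ (‖char 1 0 p‖ + ‖char 0 1 p‖) / 2 := by gcongr; exact norm_sub_le _ _
    _ = 1 := by rw [h1, h2]; norm_num

/-! Split `h ∈ H²` as `h₀ + h₁ + h₂ + h₃` according to whether its Fourier spectrum lies at the
origin, on the positive `z₁`-axis, on the positive `z₂`-axis or in the open quadrant.
Multiplication by `z̄₁` pushes `h₀` and `h₂` out of the closed quadrant and keeps `h₁`, `h₃` in it,
so `P(z̄₁h) = z̄₁(h₁ + h₃)`, and likewise `P(z̄₂h) = z̄₂(h₂ + h₃)`; hence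
`T_ā h = ½ z̄₁h₁ − ½ z̄₂h₂ + (z₁ − z₂)(−½ z̄₁z̄₂h₃)`. Conversely, for `h = 2(z₁f₁ − z₂f₂ − z₁z₂f₃)`
the difference `ā h − (f₁ + f₂ + (z₁ − z₂)f₃) = −z̄₁z₂f₂ − z₁z̄₂f₁` has no Fourier coefficients
in the closed quadrant, because `f₁` only has frequencies `(m, 0)` and `f₂` only `(0, n)`. -/

open scoped InnerProductSpace ComplexConjugate
open Submodule Set

lemma char_apply (m n : ℤ) (p : T2) : char m n p = fourier m p.1 * fourier n p.2 := rfl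

lemma char_mul_char (a b c d : ℤ) (p : T2) :
    char a b p * char c d p = char (a + c) (b + d) p := by
  simp only [char_apply, fourier_add]; ring

lemma conj_char (a b : ℤ) (p : T2) : conj (char a b p) = char (-a) (-b) p := by
  simp only [char_apply, ← fourier_neg, map_mul]

lemma integral_fourier_addCircle {T : ℝ} [Fact (0 < T)] (n : ℤ) :
    ∫ x : AddCircle T, fourier n x = if n = 0 then T else 0 := by
  split_ifs with h
  · subst h
    simp [Measure.real, AddCircle.measure_univ, (Fact.out : 0 < T).le]
  · exact integral_eq_zero_of_add_right_eq_neg (fourier_add_half_inv_index h Fact.out)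

lemma integral_char (a b : ℤ) : ∫ p : T2, char a b p = if a = 0 ∧ b = 0 then 1 else 0 := by
  rw [Measure.volume_eq_prod]
  simp only [char_apply]
  rw [integral_prod_mul (fun x : 𝕋 => fourier a x) (fun y : 𝕋 => fourier b y),
    integral_fourier_addCircle, integral_fourier_addCircle]
  split_ifs <;> simp_all

lemma coeFn_charLp (m n : ℤ) : (charLp m n : T2 → ℂ) =ᵐ[volume] char m n :=
  ContinuousMap.coeFn_toLp _ _

lemma fourierCoeff2_eq_inner (g : L2) (m n : ℤ) : fourierCoeff2 g m n = ⟪charLp m n, g⟫_ℂ := by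
  rw [fourierCoeff2, L2.inner_def]
  refine integral_congr_ae ?_
  filter_upwards [coeFn_charLp m n] with p hp
  simp [hp, mul_comm]

lemma orthonormal_charLp : Orthonormal ℂ fun k : ℤ × ℤ => charLp k.1 k.2 := by
  rw [orthonormal_iff_ite]
  rintro ⟨a, b⟩ ⟨m, n⟩
  rw [← fourierCoeff2_eq_inner, fourierCoeff2]
  calc ∫ p : T2, conj (char a b p) * charLp m n p
      = ∫ p : T2, char (m - a) (n - b) p := by
        refine integral_congr_ae ?_
        filter_upwards [coeFn_charLp m n] with p hp
        rw [hp, conj_char, char_mul_char, neg_add_eq_sub, neg_add_eq_sub]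
    _ = _ := by
        rw [integral_char]
        simp only [sub_eq_zero, Prod.mk.injEq, eq_comm]

lemma fourierCoeff2_smul (c : ℂ) (g : L2) (m n : ℤ) :
    fourierCoeff2 (c • g) m n = c * fourierCoeff2 g m n := by
  simp only [fourierCoeff2_eq_inner, inner_smul_right]

lemma fourierCoeff2_sub (g₁ g₂ : L2) (m n : ℤ) :
    fourierCoeff2 (g₁ - g₂) m n = fourierCoeff2 g₁ m n - fourierCoeff2 g₂ m n := by
  simp only [fourierCoeff2_eq_inner, inner_sub_right]

def spectralSubspace (S : Set (ℤ × ℤ)) : Submodule ℂ L2 :=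
  (span ℂ ((fun k : ℤ × ℤ => charLp k.1 k.2) '' S)).topologicalClosure

instance (S : Set (ℤ × ℤ)) : CompleteSpace (spectralSubspace S) :=
  (isClosed_topologicalClosure _).completeSpace_coe

lemma charLp_mem_spectralSubspace {S : Set (ℤ × ℤ)} {m n : ℤ} (hmn : (m, n) ∈ S) :
    charLp m n ∈ spectralSubspace S :=
  le_topologicalClosure _ (subset_span ⟨(m, n), hmn, rfl⟩)

lemma spectralSubspace_mono {S T : Set (ℤ × ℤ)} (h : S ⊆ T) :
    spectralSubspace S ≤ spectralSubspace T :=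
  topologicalClosure_mono (span_mono (image_mono h))

lemma H2_eq_spectralSubspace : H2 = spectralSubspace {k | 0 ≤ k.1 ∧ 0 ≤ k.2} := by
  rw [H2, spectralSubspace]
  congr
  ext f
  constructor
  · rintro ⟨m, n, rfl⟩
    exact ⟨(m, n), ⟨m.cast_nonneg, n.cast_nonneg⟩, rfl⟩
  · rintro ⟨⟨m, n⟩, ⟨hm, hn⟩, rfl⟩
    lift m to ℕ using hm
    lift n to ℕ using hn
    exact ⟨m, n, rfl⟩

lemma mem_orthogonal_spectralSubspace_iff {S : Set (ℤ × ℤ)} {u : L2} :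
    u ∈ (spectralSubspace S)ᗮ ↔ ∀ k ∈ S, fourierCoeff2 u k.1 k.2 = 0 := by
  simp only [fourierCoeff2_eq_inner]
  rw [spectralSubspace, orthogonal_closure]
  constructor
  · exact fun hu k hk => (mem_orthogonal _ _).1 hu _ (subset_span (mem_image_of_mem _ hk))
  · intro h
    rw [mem_orthogonal]
    intro v hv
    induction hv using span_induction with
    | mem v hv => obtain ⟨k, hk, rfl⟩ := hv; exact h k hk
    | zero => exact inner_zero_left _
    | add v w _ _ hv hw => rw [inner_add_left, hv, hw, add_zero]
    | smul c v _ hv => rw [inner_smul_left, hv, mul_zero]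

lemma fourierCoeff2_eq_zero_of_mem_spectralSubspace {S : Set (ℤ × ℤ)} {g : L2}
    (hg : g ∈ spectralSubspace S) {m n : ℤ} (hmn : (m, n) ∉ S) : fourierCoeff2 g m n = 0 := by
  have : charLp m n ∈ (spectralSubspace S)ᗮ := by
    refine mem_orthogonal_spectralSubspace_iff.2 fun k hk => ?_
    rw [fourierCoeff2_eq_inner]
    exact orthonormal_charLp.inner_eq_zero (j := (m, n)) (ne_of_mem_of_not_mem hk hmn)
  rw [fourierCoeff2_eq_inner]
  exact inner_left_of_mem_orthogonal hg this

lemma spectralSubspace_le_orthogonal {S T : Set (ℤ × ℤ)} (hST : Disjoint S T) :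
    spectralSubspace S ≤ (spectralSubspace T)ᗮ := fun _ hg =>
  mem_orthogonal_spectralSubspace_iff.2 fun _ hk =>
    fourierCoeff2_eq_zero_of_mem_spectralSubspace hg (hST.notMem_of_mem_right hk)

lemma exists_add_of_mem_spectralSubspace_union {S T : Set (ℤ × ℤ)} (hST : Disjoint S T)
    {h : L2} (hh : h ∈ spectralSubspace (S ∪ T)) :
    ∃ u ∈ spectralSubspace S, ∃ v ∈ spectralSubspace T, h = u + v := by
  set u := (spectralSubspace S).starProjection h
  set v := (spectralSubspace T).starProjection h
  have hu : u ∈ spectralSubspace S := starProjection_apply_mem _ h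
  have hv : v ∈ spectralSubspace T := starProjection_apply_mem _ h
  refine ⟨u, hu, v, hv, ?_⟩
  have hmem : h - (u + v) ∈ spectralSubspace (S ∪ T) :=
    sub_mem hh (add_mem (spectralSubspace_mono subset_union_left hu)
      (spectralSubspace_mono subset_union_right hv))
  have horth : h - (u + v) ∈ (spectralSubspace (S ∪ T))ᗮ := by
    refine mem_orthogonal_spectralSubspace_iff.2 ?_
    rintro k (hk | hk)
    · rw [← sub_sub, fourierCoeff2_sub,
        mem_orthogonal_spectralSubspace_iff.1 (sub_starProjection_mem_orthogonal h) k hk,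
        fourierCoeff2_eq_zero_of_mem_spectralSubspace hv (hST.notMem_of_mem_left hk), sub_zero]
    · rw [add_comm, ← sub_sub, fourierCoeff2_sub,
        mem_orthogonal_spectralSubspace_iff.1 (sub_starProjection_mem_orthogonal h) k hk,
        fourierCoeff2_eq_zero_of_mem_spectralSubspace hu (hST.notMem_of_mem_right hk), sub_zero]
  exact sub_eq_zero.1 ((mem_bot ℂ).1 ((orthogonal_disjoint _).le_bot ⟨hmem, horth⟩))

lemma exists_quadrant_decomposition {h : L2} (hh : h ∈ H2) :
    ∃ h₀ ∈ spectralSubspace {k | k.1 = 0 ∧ k.2 = 0},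
    ∃ h₁ ∈ spectralSubspace {k | 0 < k.1 ∧ k.2 = 0},
    ∃ h₂ ∈ spectralSubspace {k | k.1 = 0 ∧ 0 < k.2},
    ∃ h₃ ∈ spectralSubspace {k | 0 < k.1 ∧ 0 < k.2}, h = h₀ + h₁ + h₂ + h₃ := by
  rw [H2_eq_spectralSubspace] at hh
  have hsplit := spectralSubspace_mono (T := ({k | k.1 = 0 ∧ k.2 = 0} ∪ {k | 0 < k.1 ∧ k.2 = 0})
      ∪ ({k | k.1 = 0 ∧ 0 < k.2} ∪ {k | 0 < k.1 ∧ 0 < k.2})) (fun k hk => by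
    simp only [mem_union, mem_ofPred_eq] at hk ⊢; omega) hh
  obtain ⟨u, hu, v, hv, rfl⟩ := exists_add_of_mem_spectralSubspace_union
    (disjoint_left.2 fun k hk hk' => by simp only [mem_union, mem_ofPred_eq] at hk hk'; omega)
    hsplit
  obtain ⟨h₀, h₀_mem, h₁, h₁_mem, rfl⟩ := exists_add_of_mem_spectralSubspace_union
    (disjoint_left.2 fun k hk hk' => by simp only [mem_ofPred_eq] at hk hk'; omega) hu
  obtain ⟨h₂, h₂_mem, h₃, h₃_mem, rfl⟩ := exists_add_of_mem_spectralSubspace_union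
    (disjoint_left.2 fun k hk hk' => by simp only [mem_ofPred_eq] at hk hk'; omega) hv
  exact ⟨h₀, h₀_mem, h₁, h₁_mem, h₂, h₂_mem, h₃, h₃_mem, (add_assoc _ _ _).symm⟩

def mulChar (m n : ℤ) : L2 →L[ℂ] L2 :=
  (ContinuousLinearMap.mul ℂ ℂ).holderL volume ⊤ 2 2 (ContinuousMap.toLp ⊤ volume ℂ (char m n))

lemma coeFn_mulChar (m n : ℤ) (g : L2) :
    (mulChar m n g : T2 → ℂ) =ᵐ[volume] fun p => char m n p * g p := by
  filter_upwards [(ContinuousLinearMap.mul ℂ ℂ).coeFn_holder (r := 2)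
      (ContinuousMap.toLp ⊤ volume ℂ (char m n)) g,
    ContinuousMap.coeFn_toLp (p := ⊤) (𝕜 := ℂ) volume (char m n)] with p h₁ h₂
  rw [mulChar, ContinuousLinearMap.holderL_apply_apply, h₁, h₂, ContinuousLinearMap.mul_apply']

lemma mulChar_mulChar (a b c d : ℤ) (g : L2) :
    mulChar a b (mulChar c d g) = mulChar (a + c) (b + d) g := by
  refine Lp.ext ?_
  filter_upwards [coeFn_mulChar a b (mulChar c d g), coeFn_mulChar c d g,
    coeFn_mulChar (a + c) (b + d) g] with p h₁ h₂ h₃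
  rw [h₁, h₂, h₃, ← mul_assoc, char_mul_char]

lemma mulChar_zero_zero (g : L2) : mulChar 0 0 g = g := by
  refine Lp.ext ?_
  filter_upwards [coeFn_mulChar 0 0 g] with p h
  simp [h, char_apply]

lemma mulChar_charLp (a b m n : ℤ) : mulChar a b (charLp m n) = charLp (a + m) (b + n) := by
  refine Lp.ext ?_
  filter_upwards [coeFn_mulChar a b (charLp m n), coeFn_charLp m n,
    coeFn_charLp (a + m) (b + n)] with p h₁ h₂ h₃
  rw [h₁, h₂, h₃, char_mul_char]

lemma fourierCoeff2_mulChar (a b m n : ℤ) (g : L2) :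
    fourierCoeff2 (mulChar a b g) m n = fourierCoeff2 g (m - a) (n - b) := by
  refine integral_congr_ae ?_
  filter_upwards [coeFn_mulChar a b g] with p hp
  rw [hp, conj_char, conj_char, ← mul_assoc, char_mul_char]
  ring_nf

lemma mulChar_mem_spectralSubspace {a b : ℤ} {S T : Set (ℤ × ℤ)}
    (hST : MapsTo (fun k : ℤ × ℤ => (a + k.1, b + k.2)) S T) {g : L2}
    (hg : g ∈ spectralSubspace S) : mulChar a b g ∈ spectralSubspace T := by
  have hle : spectralSubspace S ≤ (spectralSubspace T).comap (mulChar a b : L2 →ₗ[ℂ] L2) := by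
    refine topologicalClosure_minimal _ ?_
      ((isClosed_topologicalClosure _).preimage (mulChar a b).continuous)
    rw [span_le]
    rintro _ ⟨k, hk, rfl⟩
    rw [SetLike.mem_coe, Submodule.mem_comap, ContinuousLinearMap.coe_coe, mulChar_charLp]
    exact charLp_mem_spectralSubspace (hST hk)
  exact Submodule.mem_comap.1 (hle hg)

lemma mulChar_mem_H2_of_forall {a b : ℤ} {S : Set (ℤ × ℤ)}
    (hS : ∀ k ∈ S, 0 ≤ a + k.1 ∧ 0 ≤ b + k.2) {g : L2} (hg : g ∈ spectralSubspace S) :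
    mulChar a b g ∈ H2 := by
  rw [H2_eq_spectralSubspace]
  exact mulChar_mem_spectralSubspace (fun k hk => hS k hk) hg

lemma mulChar_mem_H2 {a b : ℤ} (ha : 0 ≤ a) (hb : 0 ≤ b) {g : L2} (hg : g ∈ H2) :
    mulChar a b g ∈ H2 := by
  rw [H2_eq_spectralSubspace] at hg
  exact mulChar_mem_H2_of_forall (fun k hk => by simp only [mem_ofPred_eq] at hk; omega) hg

lemma mulChar_mem_H2_orthogonal {a b : ℤ} {S : Set (ℤ × ℤ)}
    (hS : ∀ k ∈ S, a + k.1 < 0 ∨ b + k.2 < 0) {g : L2} (hg : g ∈ spectralSubspace S) :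
    mulChar a b g ∈ H2ᗮ := by
  rw [H2_eq_spectralSubspace]
  refine spectralSubspace_le_orthogonal (S := {k | k.1 < 0 ∨ k.2 < 0}) ?_
    (mulChar_mem_spectralSubspace (fun k hk => hS k hk) hg)
  exact disjoint_left.2 fun k hk hk' => by simp only [mem_ofPred_eq] at hk hk'; omega

lemma Toep_conj_a_eq_P (h : L2) :
    Toep (fun p => conj ((char 1 0 p - char 0 1 p) / 2)) a19_mem.conj' h
      = (P ((2 : ℂ)⁻¹ • (mulChar (-1) 0 h - mulChar 0 (-1) h)) : L2) := by
  rw [Toep]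
  congr 2
  refine Lp.ext ?_
  filter_upwards [MemLp.coeFn_toLp ((Lp.memLp h).smul (r := 2) a19_mem.conj'),
    Lp.coeFn_smul (2 : ℂ)⁻¹ (mulChar (-1) 0 h - mulChar 0 (-1) h),
    Lp.coeFn_sub (mulChar (-1) 0 h) (mulChar 0 (-1) h),
    coeFn_mulChar (-1) 0 h, coeFn_mulChar 0 (-1) h] with p h₀ h₁ h₂ h₃ h₄
  rw [h₀, h₁, Pi.smul_apply, h₂, Pi.sub_apply, h₃, h₄]
  simp only [Pi.smul_apply', smul_eq_mul, map_div₀, map_sub, conj_char, map_ofNat, neg_zero]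
  ring

lemma coe_P_eq_of_sub_mem_orthogonal {x y : L2} (hy : y ∈ H2) (hxy : x - y ∈ H2ᗮ) :
    (P x : L2) = y :=
  eq_starProjection_of_mem_orthogonal hy hxy

lemma coe_P_conj_a_mul_of_quadrants {h₀ h₁ h₂ h₃ : L2}
    (h₀_mem : h₀ ∈ spectralSubspace {k | k.1 = 0 ∧ k.2 = 0})
    (h₁_mem : h₁ ∈ spectralSubspace {k | 0 < k.1 ∧ k.2 = 0})
    (h₂_mem : h₂ ∈ spectralSubspace {k | k.1 = 0 ∧ 0 < k.2})
    (h₃_mem : h₃ ∈ spectralSubspace {k | 0 < k.1 ∧ 0 < k.2}) :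
    (P ((2 : ℂ)⁻¹ • (mulChar (-1) 0 (h₀ + h₁ + h₂ + h₃) - mulChar 0 (-1) (h₀ + h₁ + h₂ + h₃)))
      : L2) = (2 : ℂ)⁻¹ • mulChar (-1) 0 h₁ + -(2 : ℂ)⁻¹ • mulChar 0 (-1) h₂
        + (mulChar 1 0 (-(2 : ℂ)⁻¹ • mulChar (-1) (-1) h₃)
          - mulChar 0 1 (-(2 : ℂ)⁻¹ • mulChar (-1) (-1) h₃)) := by
  have hf₃ : mulChar (-1) (-1) h₃ ∈ H2 :=
    mulChar_mem_H2_of_forall (fun k hk => by simp only [mem_ofPred_eq] at hk; omega) h₃_mem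
  refine coe_P_eq_of_sub_mem_orthogonal ?_ ?_
  · refine add_mem (add_mem (smul_mem _ _ ?_) (smul_mem _ _ ?_))
      (sub_mem (mulChar_mem_H2 zero_le_one le_rfl (smul_mem _ _ hf₃))
        (mulChar_mem_H2 le_rfl zero_le_one (smul_mem _ _ hf₃)))
    · exact mulChar_mem_H2_of_forall (fun k hk => by simp only [mem_ofPred_eq] at hk; omega) h₁_mem
    · exact mulChar_mem_H2_of_forall (fun k hk => by simp only [mem_ofPred_eq] at hk; omega) h₂_mem
  have hx : (2 : ℂ)⁻¹ • (mulChar (-1) 0 (h₀ + h₁ + h₂ + h₃) - mulChar 0 (-1) (h₀ + h₁ + h₂ + h₃))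
      - ((2 : ℂ)⁻¹ • mulChar (-1) 0 h₁ + -(2 : ℂ)⁻¹ • mulChar 0 (-1) h₂
        + (mulChar 1 0 (-(2 : ℂ)⁻¹ • mulChar (-1) (-1) h₃)
          - mulChar 0 1 (-(2 : ℂ)⁻¹ • mulChar (-1) (-1) h₃)))
      = (2 : ℂ)⁻¹ • (mulChar (-1) 0 h₀ + mulChar (-1) 0 h₂ - mulChar 0 (-1) h₀
          - mulChar 0 (-1) h₁) := by
    simp only [_root_.map_smul, map_add, mulChar_mulChar]
    norm_num [mulChar_zero_zero]
    module
  rw [hx]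
  refine smul_mem _ _ (sub_mem (sub_mem (add_mem ?_ ?_) ?_) ?_)
  · exact mulChar_mem_H2_orthogonal (fun k hk => by simp only [mem_ofPred_eq] at hk; omega) h₀_mem
  · exact mulChar_mem_H2_orthogonal (fun k hk => by simp only [mem_ofPred_eq] at hk; omega) h₂_mem
  · exact mulChar_mem_H2_orthogonal (fun k hk => by simp only [mem_ofPred_eq] at hk; omega) h₀_mem
  · exact mulChar_mem_H2_orthogonal (fun k hk => by simp only [mem_ofPred_eq] at hk; omega) h₁_mem

lemma exists_decomposition_of_eq_P_conj_a_mul {h : L2} (hh : h ∈ H2) :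
    ∃ f₁ f₂ f₃ : L2, f₁ ∈ H2 ∧ f₂ ∈ H2 ∧ f₃ ∈ H2 ∧
      (∀ m n : ℤ, n ≠ 0 → fourierCoeff2 f₁ m n = 0) ∧
      (∀ m n : ℤ, m ≠ 0 → fourierCoeff2 f₂ m n = 0) ∧
      (P ((2 : ℂ)⁻¹ • (mulChar (-1) 0 h - mulChar 0 (-1) h)) : L2)
        = f₁ + f₂ + (mulChar 1 0 f₃ - mulChar 0 1 f₃) := by
  obtain ⟨h₀, h₀_mem, h₁, h₁_mem, h₂, h₂_mem, h₃, h₃_mem, rfl⟩ := exists_quadrant_decomposition hh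
  have hf₁ : mulChar (-1) 0 h₁ ∈ spectralSubspace {k | 0 ≤ k.1 ∧ k.2 = 0} :=
    mulChar_mem_spectralSubspace (fun k hk => by simp only [mem_ofPred_eq] at hk ⊢; omega) h₁_mem
  have hf₂ : mulChar 0 (-1) h₂ ∈ spectralSubspace {k | k.1 = 0 ∧ 0 ≤ k.2} :=
    mulChar_mem_spectralSubspace (fun k hk => by simp only [mem_ofPred_eq] at hk ⊢; omega) h₂_mem
  refine ⟨_, _, _, smul_mem _ _ ?_, smul_mem _ _ ?_, smul_mem _ _ ?_, fun m n hn => ?_,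
    fun m n hm => ?_, coe_P_conj_a_mul_of_quadrants h₀_mem h₁_mem h₂_mem h₃_mem⟩
  · exact mulChar_mem_H2_of_forall (fun k hk => by simp only [mem_ofPred_eq] at hk; omega) h₁_mem
  · exact mulChar_mem_H2_of_forall (fun k hk => by simp only [mem_ofPred_eq] at hk; omega) h₂_mem
  · exact mulChar_mem_H2_of_forall (fun k hk => by simp only [mem_ofPred_eq] at hk; omega) h₃_mem
  · rw [fourierCoeff2_smul, fourierCoeff2_eq_zero_of_mem_spectralSubspace hf₁ fun h => hn h.2,
      mul_zero]
  · rw [fourierCoeff2_smul, fourierCoeff2_eq_zero_of_mem_spectralSubspace hf₂ fun h => hm h.1,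
      mul_zero]

lemma exists_eq_P_conj_a_mul_of_decomposition {f₁ f₂ f₃ : L2} (hf₁ : f₁ ∈ H2) (hf₂ : f₂ ∈ H2)
    (hf₃ : f₃ ∈ H2) (hf₁' : ∀ m n : ℤ, n ≠ 0 → fourierCoeff2 f₁ m n = 0)
    (hf₂' : ∀ m n : ℤ, m ≠ 0 → fourierCoeff2 f₂ m n = 0) :
    ∃ h ∈ H2, (P ((2 : ℂ)⁻¹ • (mulChar (-1) 0 h - mulChar 0 (-1) h)) : L2)
        = f₁ + f₂ + (mulChar 1 0 f₃ - mulChar 0 1 f₃) := by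
  set h : L2 := (2 : ℂ) • (mulChar 1 0 f₁ - mulChar 0 1 f₂ - mulChar 1 1 f₃) with hh
  refine ⟨h, ?_, ?_⟩
  · exact smul_mem _ _ (sub_mem (sub_mem (mulChar_mem_H2 zero_le_one le_rfl hf₁)
      (mulChar_mem_H2 le_rfl zero_le_one hf₂)) (mulChar_mem_H2 zero_le_one zero_le_one hf₃))
  refine coe_P_eq_of_sub_mem_orthogonal (add_mem (add_mem hf₁ hf₂)
    (sub_mem (mulChar_mem_H2 zero_le_one le_rfl hf₃) (mulChar_mem_H2 le_rfl zero_le_one hf₃))) ?_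
  have hx : (2 : ℂ)⁻¹ • (mulChar (-1) 0 h - mulChar 0 (-1) h)
      - (f₁ + f₂ + (mulChar 1 0 f₃ - mulChar 0 1 f₃)) = -mulChar (-1) 1 f₂ - mulChar 1 (-1) f₁ := by
    rw [hh]
    simp only [_root_.map_smul, map_sub, mulChar_mulChar]
    norm_num [mulChar_zero_zero]
    module
  have h₁ : mulChar 1 (-1) f₁ ∈ H2ᗮ := by
    rw [H2_eq_spectralSubspace, mem_orthogonal_spectralSubspace_iff]
    rintro ⟨m, n⟩ ⟨-, hn⟩
    exact (fourierCoeff2_mulChar _ _ _ _ _).trans (hf₁' _ _ (by omega))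
  have h₂ : mulChar (-1) 1 f₂ ∈ H2ᗮ := by
    rw [H2_eq_spectralSubspace, mem_orthogonal_spectralSubspace_iff]
    rintro ⟨m, n⟩ ⟨hm, -⟩
    exact (fourierCoeff2_mulChar _ _ _ _ _).trans (hf₂' _ _ (by omega))
  rw [hx]
  exact sub_mem (neg_mem h₂) h₁

lemma ae_eq_add_add_mul_iff {f f₁ f₂ f₃ : L2} :
    ((f : T2 → ℂ) =ᵐ[volume] fun p => f₁ p + f₂ p + (fourier 1 p.1 - fourier 1 p.2) * f₃ p) ↔
      f = f₁ + f₂ + (mulChar 1 0 f₃ - mulChar 0 1 f₃) := by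
  have hg : (⇑(f₁ + f₂ + (mulChar 1 0 f₃ - mulChar 0 1 f₃)) : T2 → ℂ) =ᵐ[volume]
      fun p => f₁ p + f₂ p + (fourier 1 p.1 - fourier 1 p.2) * f₃ p := by
    filter_upwards [Lp.coeFn_add (f₁ + f₂) (mulChar 1 0 f₃ - mulChar 0 1 f₃),
      Lp.coeFn_add f₁ f₂, Lp.coeFn_sub (mulChar 1 0 f₃) (mulChar 0 1 f₃),
      coeFn_mulChar 1 0 f₃, coeFn_mulChar 0 1 f₃] with p h₁ h₂ h₃ h₄ h₅
    rw [h₁, Pi.add_apply, h₂, Pi.add_apply, h₃, Pi.sub_apply, h₄, h₅, char_apply, char_apply]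
    simp only [fourier_zero, one_mul, mul_one, sub_mul]
  rw [Lp.ext_iff]
  exact ⟨fun hf => hf.trans hg.symm, fun hf => hf.trans hg⟩

lemma exists_eq_P_conj_a_mul_iff (f : L2) :
    (∃ h ∈ H2, (P ((2 : ℂ)⁻¹ • (mulChar (-1) 0 h - mulChar 0 (-1) h)) : L2) = f) ↔
      ∃ f₁ f₂ f₃ : L2, f₁ ∈ H2 ∧ f₂ ∈ H2 ∧ f₃ ∈ H2 ∧
        (∀ m n : ℤ, n ≠ 0 → fourierCoeff2 f₁ m n = 0) ∧
        (∀ m n : ℤ, m ≠ 0 → fourierCoeff2 f₂ m n = 0) ∧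
        f = f₁ + f₂ + (mulChar 1 0 f₃ - mulChar 0 1 f₃) := by
  constructor
  · rintro ⟨h, hh, rfl⟩
    exact exists_decomposition_of_eq_P_conj_a_mul hh
  · rintro ⟨f₁, f₂, f₃, hf₁, hf₂, hf₃, hf₁', hf₂', rfl⟩
    exact exists_eq_P_conj_a_mul_of_decomposition hf₁ hf₂ hf₃ hf₁' hf₂'

theorem mem_mate_range_iff_z1_minus_z2_general (f : L2) :
    (∃ h ∈ H2,
        Toep (fun p => starRingEnd ℂ ((char 1 0 p - char 0 1 p) / 2)) a19_mem.conj' h = f) ↔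
      ∃ f₁ f₂ f₃ : L2, f₁ ∈ H2 ∧ f₂ ∈ H2 ∧ f₃ ∈ H2 ∧
        (∀ m n : ℤ, n ≠ 0 → fourierCoeff2 f₁ m n = 0) ∧
        (∀ m n : ℤ, m ≠ 0 → fourierCoeff2 f₂ m n = 0) ∧
        (f : T2 → ℂ) =ᵐ[volume] fun p =>
          f₁ p + f₂ p + (fourier 1 p.1 - fourier 1 p.2) * f₃ p := by
  simp only [Toep_conj_a_eq_P, ae_eq_add_add_mul_iff]
  exact exists_eq_P_conj_a_mul_iff f

/-- Theorem 5.3 (first part): for `a(z) = (z₁−z₂)/2`, a function `f ∈ H²(𝔻²)` belongs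
to `M(ā) = T_ā H²(𝔻²)` if and only if `f(z) = f₁(z₁) + f₂(z₂) + (z₁−z₂)f₃(z)` for some
`f₁, f₂ ∈ H²(𝔻)` (elements of `H²(𝔻²)` depending only on `z₁`, resp. `z₂`) and
`f₃ ∈ H²(𝔻²)`. -/
theorem mem_mate_range_iff_z1_minus_z2 (f : L2) (hf : f ∈ H2) :
    (∃ h ∈ H2,
        Toep (fun p => starRingEnd ℂ ((char 1 0 p - char 0 1 p) / 2)) a19_mem.conj' h = f) ↔
      ∃ f₁ f₂ f₃ : L2, f₁ ∈ H2 ∧ f₂ ∈ H2 ∧ f₃ ∈ H2 ∧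
        (∀ m n : ℤ, n ≠ 0 → fourierCoeff2 f₁ m n = 0) ∧
        (∀ m n : ℤ, m ≠ 0 → fourierCoeff2 f₂ m n = 0) ∧
        (f : T2 → ℂ) =ᵐ[volume] fun p =>
          f₁ p + f₂ p + (fourier 1 p.1 - fourier 1 p.2) * f₃ p :=
  mem_mate_range_iff_z1_minus_z2_general f
end
end
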